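/- Let m be an integer with m ≥ 2 and let T be a sequence over C_m ⊕ C_m of length 3 such that T^{m−1} (the sequence of length 3m − 3 in which each element of T is repeated m − 1 times as often) has no short zero-sum subsequence. Then T = f_1 · f_2 · (−x·f_1 + f_2) for some basis {f_1, f_2} of C_m ⊕ C_m and some integer x ∈ [1, m − 1] with gcd(x, m) = 1 and x ≤ m/2. In particular, for each f in the support of T, the sequence (f^{−1}T)^{m−1} (the sequence T with one occurrence of f removed, repeated m − 1 times) has no nonempty zero-sum subsequence. -/

import Mathlib

/-!
Write `T = A · B · C`. The hypothesis says that `x A + y B + z C = 0` has no solution with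
`0 ≤ x, y, z < m` and `0 < x + y + z ≤ m`. A relation `x A + y B = 0` or its negative has
coefficient sum at most `m`, so any two of `A, B, C` are independent. Hence `A, B` is a basis,
`p A + q B + C = 0` for some `p, q`, every relation is a multiple `γ (p, q, 1)`, and the
hypothesis becomes `|γ p| + |γ q| + |γ| > m` for all `γ ≠ 0`, where `|·|` is the least
nonnegative residue modulo `m`.

Then `w = 1 + p + q` is a unit and `u = (p, q, 1) / w` satisfies
`|k u₁| + |k u₂| + |k u₃| = m + |k|` for all `k ≠ 0`. Comparing `k - 1` with `k` shows that
exactly one `uᵢ` wraps around modulo `m` at each step. The one wrapping at `k = 2` has residue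
`c ≥ m / 2`. If the other two residues `a, b` were at least `2`, the first `a` multiples of
`-u₃ / u₁` would stay below `m / 2`, so that `a ∣ |-u₃| = m - c = a + b - 1`; likewise
`b ∣ a + b - 1`, which is absurd. So some `uᵢ = 1`, i.e. `q = -1`, `p = -1` or `p + q = 0`:
these are the three ways of writing `T = f₁ · f₂ · (-x f₁ + f₂)`, with `x` or `m - x` chosen
to be at most `m / 2`.
-/

lemma Nat.add_ne_add_one_of_dvd_of_dvd {a b s : ℕ} (ha : 2 ≤ a) (hb : 2 ≤ b)
    (has : a ∣ s) (hbs : b ∣ s) : a + b ≠ s + 1 := by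
  obtain ⟨c, rfl⟩ := has
  obtain ⟨d, hd⟩ := hbs
  rcases c with _ | _ | c <;> rcases d with _ | _ | d <;> intro h <;> nlinarith

namespace ZMod

variable {m : ℕ}

lemma val_add_eq_or [NeZero m] (a b : ZMod m) :
    (a + b).val = a.val + b.val ∨ (a + b).val + m = a.val + b.val := by
  rcases lt_or_ge (a.val + b.val) m with h | h
  · exact .inl (val_add_of_lt h)
  · exact .inr (val_add_val_of_le h).symm

lemma val_add_val_neg_of_ne_zero [NeZero m] {a : ZMod m} (ha : a ≠ 0) : a.val + (-a).val = m := by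
  have := val_lt a
  rw [neg_val, if_neg ha]
  omega

lemma val_add_val_neg_le [NeZero m] (a : ZMod m) : a.val + (-a).val ≤ m := by
  by_cases ha : a = 0
  · simp [ha]
  · exact (val_add_val_neg_of_ne_zero ha).le

lemma val_add_val_le_or_val_neg_add_val_neg_le [NeZero m] (a b : ZMod m) :
    a.val + b.val ≤ m ∨ (-a).val + (-b).val ≤ m := by
  by_cases ha : a = 0
  · simp [ha, (val_lt b).le]
  by_cases hb : b = 0
  · simp [hb, (val_lt a).le]
  have := val_add_val_neg_of_ne_zero ha
  have := val_add_val_neg_of_ne_zero hb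
  omega

lemma val_natCast_mul_of_forall_two_mul_val_lt [NeZero m] {x : ZMod m} {n : ℕ}
    (h : ∀ i, 0 < i → i < n → 2 * ((i : ZMod m) * x).val < m) :
    ((n : ZMod m) * x).val = n * x.val := by
  suffices ∀ j ≤ n, ((j : ZMod m) * x).val = j * x.val from this n le_rfl
  intro j hj
  induction j with
  | zero => simp
  | succ j ih =>
    rcases Nat.eq_zero_or_pos j with rfl | hj0
    · simp
    have hx := h 1 one_pos (by omega)
    rw [Nat.cast_one, one_mul] at hx
    have hjx := h j hj0 (by omega)
    rw [Nat.cast_succ, add_mul, one_mul, val_add_of_lt (by omega), ih (by omega), Nat.succ_mul]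

lemma eq_add_val_of_natCast_eq [NeZero m] {n : ℕ} {k : ZMod m} (h : (n : ZMod m) = k)
    (hlo : m ≤ n) (hhi : n < 2 * m) : n = m + k.val := by
  rw [← h, ← Nat.sub_add_cancel hlo, Nat.cast_add, natCast_self, add_zero,
    val_cast_of_lt (by omega)]
  omega

-- The second case, where `k * u` wraps around modulo `m`, is the one with `(k * u).val < u.val`.
lemma val_mul_eq_or [NeZero m] (k u : ZMod m) :
    (k * u).val = ((k - 1) * u).val + u.val ∨ (k * u).val + m = ((k - 1) * u).val + u.val := by
  rw [show k * u = (k - 1) * u + u by ring]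
  exact val_add_eq_or _ _

lemma two_le_val_of_isUnit [Fact (1 < m)] {u : ZMod m} (hu : IsUnit u) (hu₁ : u ≠ 1) :
    2 ≤ u.val := by
  have := val_pos.mpr hu.ne_zero
  have : u.val ≠ 1 := fun h => hu₁ (val_injective m (by rw [h, val_one]))
  omega

lemma val_dvd_val_neg_of_wrap [NeZero m] {u v : ZMod m} (hu : IsUnit u) (hv : IsUnit v)
    (hv₂ : m ≤ 2 * v.val)
    (hwrap : ∀ k : ZMod m, k ≠ 0 → k ≠ 1 → (k * u).val < u.val → v.val ≤ (k * v).val) :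
    u.val ∣ (-v).val := by
  set x := -v * u⁻¹
  have hmul : ((u.val : ZMod m) * x).val = u.val * x.val := by
    refine val_natCast_mul_of_forall_two_mul_val_lt fun i hi₀ hi => ?_
    -- `i * x = -(k * v)` for the `k` with `k * u = i`, and `v` does not wrap at `k`
    set k := (i : ZMod m) * u⁻¹
    have hku : k * u = i := by rw [mul_assoc, inv_mul_of_unit u hu, mul_one]
    have hival : (i : ZMod m).val = i := val_cast_of_lt (hi.trans (val_lt u))
    have hk₀ : k ≠ 0 := by
      rintro hk
      rw [hk, zero_mul] at hku
      rw [← hku, val_zero] at hival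
      omega
    have hk₁ : k ≠ 1 := by
      rintro hk
      rw [hk, one_mul] at hku
      rw [← hku] at hival
      omega
    have hkv := hwrap k hk₀ hk₁ (by rw [hku, hival]; exact hi)
    have hkv' : (k * v).val ≠ v.val := fun h =>
      hk₁ (hv.mul_right_cancel (by rw [one_mul]; exact val_injective m h))
    have hneg := val_add_val_neg_of_ne_zero ((hv.mul_left_eq_zero).not.mpr hk₀)
    rw [show (i : ZMod m) * x = -(k * v) by ring]
    omega
  rw [natCast_zmod_val, show u * x = -v by rw [mul_comm, mul_assoc, inv_mul_of_unit u hu, mul_one]]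
    at hmul
  exact Dvd.intro _ hmul.symm

section WrapCount

variable [Fact (1 < m)] {u₁ u₂ u₃ : ZMod m}
  (hK : ∀ k : ZMod m, k ≠ 0 → (k * u₁).val + (k * u₂).val + (k * u₃).val = m + k.val)
include hK

/-- Comparing `hK` at `k - 1` and at `k`: exactly one of the `uᵢ` wraps around modulo `m`
between `(k - 1) * uᵢ` and `k * uᵢ`. -/
lemma wrap_trichotomy {k : ZMod m} (hk₀ : k ≠ 0) (hk₁ : k ≠ 1) :
    ((k * u₁).val < u₁.val ∧ u₂.val ≤ (k * u₂).val ∧ u₃.val ≤ (k * u₃).val) ∨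
    ((k * u₂).val < u₂.val ∧ u₁.val ≤ (k * u₁).val ∧ u₃.val ≤ (k * u₃).val) ∨
    ((k * u₃).val < u₃.val ∧ u₁.val ≤ (k * u₁).val ∧ u₂.val ≤ (k * u₂).val) := by
  have hsum := hK 1 one_ne_zero
  simp only [one_mul, val_one] at hsum
  have hk := hK k hk₀
  have hk' := hK (k - 1) (sub_ne_zero.mpr hk₁)
  have hkval : (k - 1).val + 1 = k.val := by
    have := val_pos.mpr hk₀
    rw [val_sub (by rwa [val_one]), val_one]
    omega
  have := val_mul_eq_or k u₁
  have := val_mul_eq_or k u₂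
  have := val_mul_eq_or k u₃
  have := val_lt ((k - 1) * u₁)
  have := val_lt ((k - 1) * u₂)
  have := val_lt ((k - 1) * u₃)
  omega

variable (h₁ : IsUnit u₁) (h₂ : IsUnit u₂) (h₃ : IsUnit u₃)
include h₁ h₂ h₃

lemma eq_one_or_eq_one_of_le_two_mul_val (h₃' : m ≤ 2 * u₃.val) : u₁ = 1 ∨ u₂ = 1 := by
  by_contra! ⟨hu₁, hu₂⟩
  have hsum := hK 1 one_ne_zero
  simp only [one_mul, val_one] at hsum
  have hd₁ := val_dvd_val_neg_of_wrap h₁ h₃ h₃' fun k hk₀ hk₁ hw => by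
    rcases wrap_trichotomy hK hk₀ hk₁ with h | h | h <;> omega
  have hd₂ := val_dvd_val_neg_of_wrap h₂ h₃ h₃' fun k hk₀ hk₁ hw => by
    rcases wrap_trichotomy hK hk₀ hk₁ with h | h | h <;> omega
  have hneg := val_add_val_neg_of_ne_zero h₃.ne_zero
  exact Nat.add_ne_add_one_of_dvd_of_dvd (two_le_val_of_isUnit h₁ hu₁)
    (two_le_val_of_isUnit h₂ hu₂) hd₁ hd₂ (by omega)

theorem eq_one_or_eq_one_or_eq_one : u₁ = 1 ∨ u₂ = 1 ∨ u₃ = 1 := by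
  by_contra! ⟨hu₁, hu₂, hu₃⟩
  have ha := two_le_val_of_isUnit h₁ hu₁
  have hc := two_le_val_of_isUnit h₃ hu₃
  have := val_lt u₁
  have h2val : ((2 : ℕ) : ZMod m).val = 2 := val_cast_of_lt (by omega)
  have h2₀ : ((2 : ℕ) : ZMod m) ≠ 0 := fun h => by rw [h, val_zero] at h2val; omega
  have h2₁ : ((2 : ℕ) : ZMod m) ≠ 1 := fun h => by rw [h, val_one] at h2val; omega
  have hwrap₂ : ∀ u : ZMod m, (((2 : ℕ) : ZMod m) * u).val < u.val → m ≤ 2 * u.val := by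
    intro u hu
    rw [Nat.cast_two, two_mul] at hu
    rcases val_add_eq_or u u with h | h <;> omega
  rcases wrap_trichotomy hK h2₀ h2₁ with h | h | h
  · have := eq_one_or_eq_one_of_le_two_mul_val (fun k hk => by have := hK k hk; omega)
      h₂ h₃ h₁ (hwrap₂ u₁ h.1)
    tauto
  · have := eq_one_or_eq_one_of_le_two_mul_val (fun k hk => by have := hK k hk; omega)
      h₁ h₃ h₂ (hwrap₂ u₂ h.1)
    tauto
  · have := eq_one_or_eq_one_of_le_two_mul_val hK h₁ h₂ h₃ (hwrap₂ u₃ h.1)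
    tauto

end WrapCount

section Relation

variable [NeZero m] {p q : ZMod m}
  (h : ∀ γ : ZMod m, γ ≠ 0 → m < (γ * p).val + (γ * q).val + γ.val)
include h

lemma isUnit_of_forall_lt_val_add : IsUnit p := by
  rw [isUnit_iff_mem_nonZeroDivisors_of_finite, mem_nonZeroDivisors_iff_right]
  by_contra! ⟨γ, hγp, hγ⟩
  have hpos := h γ hγ
  have hneg := h (-γ) (neg_ne_zero.mpr hγ)
  rw [hγp, val_zero] at hpos
  rw [neg_mul, neg_mul, hγp, neg_zero, val_zero] at hneg
  have := val_add_val_neg_le (γ * q)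
  have := val_add_val_neg_of_ne_zero hγ
  omega

-- The sum is congruent to `γ * (1 + p + q)`, and `h (-γ)` bounds it by `2 * m`.
lemma val_mul_add_val_mul_add_val_eq {γ : ZMod m} (hγ : γ ≠ 0) :
    (γ * p).val + (γ * q).val + γ.val = m + (γ * (1 + p + q)).val := by
  have hp := isUnit_of_forall_lt_val_add h
  have hq := isUnit_of_forall_lt_val_add (p := q) (q := p) fun γ hγ => by have := h γ hγ; omega
  have hneg := h (-γ) (neg_ne_zero.mpr hγ)
  rw [neg_mul, neg_mul] at hneg
  have := val_add_val_neg_of_ne_zero (hp.mul_left_eq_zero.not.mpr hγ)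
  have := val_add_val_neg_of_ne_zero (hq.mul_left_eq_zero.not.mpr hγ)
  have := val_add_val_neg_of_ne_zero hγ
  exact eq_add_val_of_natCast_eq (by push_cast [natCast_zmod_val]; ring) (h γ hγ).le (by omega)

lemma isUnit_one_add_add : IsUnit (1 + p + q) := by
  rw [isUnit_iff_mem_nonZeroDivisors_of_finite, mem_nonZeroDivisors_iff_right]
  by_contra! ⟨γ, hγw, hγ⟩
  have := val_mul_add_val_mul_add_val_eq h hγ
  have := h γ hγ
  rw [hγw, val_zero] at *
  omega

theorem eq_neg_one_or_eq_neg_one_or_add_eq_zero [Fact (1 < m)] :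
    p = -1 ∨ q = -1 ∨ p + q = 0 := by
  have hp := isUnit_of_forall_lt_val_add h
  have hq := isUnit_of_forall_lt_val_add (p := q) (q := p) fun γ hγ => by have := h γ hγ; omega
  have hw := isUnit_one_add_add h
  set w := 1 + p + q
  have hw' : IsUnit w⁻¹ := IsUnit.of_mul_eq_one w (inv_mul_of_unit w hw)
  have hK : ∀ k : ZMod m, k ≠ 0 →
      (k * (p * w⁻¹)).val + (k * (q * w⁻¹)).val + (k * w⁻¹).val = m + k.val := by
    intro k hk
    have e : ∀ x, k * (x * w⁻¹) = k * w⁻¹ * x := fun x => by ring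
    rw [e, e, val_mul_add_val_mul_add_val_eq h (hw'.mul_left_eq_zero.not.mpr hk), mul_assoc,
      inv_mul_of_unit w hw, mul_one]
  have hcancel : ∀ x : ZMod m, x * w⁻¹ = 1 → x = w := fun x hx => by
    rw [← mul_one x, ← inv_mul_of_unit w hw, ← mul_assoc, hx, one_mul]
  rcases eq_one_or_eq_one_or_eq_one hK (hp.mul hw') (hq.mul hw') hw' with h₁ | h₂ | h₃
  · right; left; linear_combination -hcancel p h₁
  · left; linear_combination -hcancel q h₂
  · right; right; linear_combination -hcancel 1 (by rw [one_mul, h₃])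

end Relation

end ZMod

lemma Multiset.exists_eq_replicate_add_replicate_of_le {α : Type*} {U : Multiset α} {a b : α}
    {n k : ℕ} (h : U ≤ replicate n a + replicate k b) :
    ∃ i ≤ n, ∃ j ≤ k, U = replicate i a + replicate j b := by
  classical
  obtain ⟨i, hi, hai⟩ := le_replicate_iff.mp (inter_le_right (s := U) (t := replicate n a))
  obtain ⟨j, hj, hbj⟩ := le_replicate_iff.mp (tsub_le_iff_left.mpr h)
  exact ⟨i, hi, j, hj, by rw [← hai, ← hbj, add_comm, sub_add_inter]⟩

section ZeroSums

open Multiset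

variable {m : ℕ} {G : Type*} [AddCommGroup G] [Module (ZMod m) G]

def IsShortZeroSumFree {M : Type*} [AddCommMonoid M] (n : ℕ) (S : Multiset M) : Prop :=
  ¬ ∃ U ≤ S, U ≠ 0 ∧ U.sum = 0 ∧ card U ≤ n

def IsZeroSumFree {M : Type*} [AddCommMonoid M] (S : Multiset M) : Prop :=
  ¬ ∃ U ≤ S, U ≠ 0 ∧ U.sum = 0

lemma linearIndependent_pair_neg_smul_add {P Q : G} (hPQ : LinearIndependent (ZMod m) ![P, Q])
    (ξ : ZMod m) : LinearIndependent (ZMod m) ![P, -ξ • P + Q] := by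
  rw [LinearIndependent.pair_iff] at hPQ ⊢
  intro s t hst
  obtain ⟨hs, ht⟩ := hPQ (s - t * ξ) t (by rw [← hst]; module)
  rw [ht, zero_mul, sub_zero] at hs
  exact ⟨hs, ht⟩

variable [NeZero m]

lemma sum_replicate_val (x : ZMod m) (A : G) : (replicate x.val A).sum = x • A := by
  rw [sum_replicate, ← Nat.cast_smul_eq_nsmul (ZMod m), ZMod.natCast_zmod_val]

namespace IsShortZeroSumFree

variable {A B C : G} (h : IsShortZeroSumFree m ((m - 1) • ({A, B, C} : Multiset G)))
include h

lemma eq_zero_of_smul_add_smul_add_smul_eq_zero {x y z : ZMod m}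
    (hxyz : x • A + y • B + z • C = 0) (hle : x.val + y.val + z.val ≤ m) :
    x = 0 ∧ y = 0 ∧ z = 0 := by
  by_contra hne
  refine h ⟨replicate x.val A + replicate y.val B + replicate z.val C, ?_, ?_, ?_, ?_⟩
  · have := ZMod.val_lt x
    have := ZMod.val_lt y
    have := ZMod.val_lt z
    simp only [insert_eq_cons, nsmul_cons, nsmul_singleton, ← add_assoc]
    exact add_le_add (add_le_add ((replicate_le_replicate _).mpr (by omega))
      ((replicate_le_replicate _).mpr (by omega))) ((replicate_le_replicate _).mpr (by omega))
  · intro h0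
    apply hne
    simpa [← ZMod.val_eq_zero, and_assoc] using congrArg card h0
  · simpa only [sum_add, sum_replicate_val] using hxyz
  · simpa using hle

lemma linearIndependent_pair : LinearIndependent (ZMod m) ![A, B] := by
  rw [LinearIndependent.pair_iff]
  intro x y hxy
  rcases ZMod.val_add_val_le_or_val_neg_add_val_neg_le x y with hle | hle
  · have := h.eq_zero_of_smul_add_smul_add_smul_eq_zero (z := 0) (by simpa) (by simpa)
    exact ⟨this.1, this.2.1⟩
  · have := h.eq_zero_of_smul_add_smul_add_smul_eq_zero (x := -x) (y := -y) (z := 0)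
      (by rw [neg_smul, neg_smul, ← neg_add, hxy]; simp) (by simpa)
    exact ⟨neg_eq_zero.mp this.1, neg_eq_zero.mp this.2.1⟩

end IsShortZeroSumFree

lemma LinearIndependent.isZeroSumFree_nsmul_pair {P Q : G}
    (hPQ : LinearIndependent (ZMod m) ![P, Q]) :
    IsZeroSumFree ((m - 1) • ({P, Q} : Multiset G)) := by
  rintro ⟨U, hU, hU₀, hsum⟩
  rw [insert_eq_cons, nsmul_cons, nsmul_singleton, nsmul_singleton] at hU
  obtain ⟨i, hi, j, hj, rfl⟩ := exists_eq_replicate_add_replicate_of_le hU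
  rw [sum_add, sum_replicate, sum_replicate, ← Nat.cast_smul_eq_nsmul (ZMod m),
    ← Nat.cast_smul_eq_nsmul (ZMod m)] at hsum
  obtain ⟨hi₀, hj₀⟩ := LinearIndependent.pair_iff.mp hPQ _ _ hsum
  rw [ZMod.natCast_eq_zero_iff] at hi₀ hj₀
  have := NeZero.pos m
  obtain rfl := Nat.eq_zero_of_dvd_of_lt hi₀ (by omega)
  obtain rfl := Nat.eq_zero_of_dvd_of_lt hj₀ (by omega)
  simp at hU₀

theorem IsShortZeroSumFree.isZeroSumFree_nsmul_erase [DecidableEq G] {T : Multiset G}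
    (hT : card T = 3) (h : IsShortZeroSumFree m ((m - 1) • T)) {f : G} (hf : f ∈ T) :
    IsZeroSumFree ((m - 1) • T.erase f) := by
  obtain ⟨P, Q, hPQ⟩ := card_eq_two.mp (show card (T.erase f) = 2 by
    rw [card_erase_of_mem hf, hT]; rfl)
  have hT' : ({P, Q, f} : Multiset G) = T := by
    rw [← cons_erase hf, hPQ]
    exact coe_eq_coe.mpr (List.rotate_perm [P, Q, f] 2).symm
  rw [hPQ]
  exact (hT' ▸ h).linearIndependent_pair.isZeroSumFree_nsmul_pair

end ZeroSums

def HasStandardForm (m : ℕ) (T : Multiset (ZMod m × ZMod m)) : Prop :=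
  ∃ (f1 f2 : ZMod m × ZMod m) (x : ℕ),
    (∀ a b : ℤ, a • f1 + b • f2 = 0 → a • f1 = 0 ∧ b • f2 = 0) ∧
    AddSubgroup.closure ({f1, f2} : Set (ZMod m × ZMod m)) = ⊤ ∧
    1 ≤ x ∧ x ≤ m - 1 ∧ Nat.gcd x m = 1 ∧ 2 * x ≤ m ∧
    T = {f1, f2, (-(x : ℤ)) • f1 + f2}

section Basis

variable {m : ℕ} [NeZero m] {P Q : ZMod m × ZMod m}

lemma exists_smul_add_smul_eq_of_linearIndependent (hPQ : LinearIndependent (ZMod m) ![P, Q])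
    (R : ZMod m × ZMod m) : ∃ x y : ZMod m, x • P + y • Q = R := by
  let f := (LinearMap.toSpanSingleton (ZMod m) _ P).coprod (LinearMap.toSpanSingleton (ZMod m) _ Q)
  have hf : Function.Injective f := by
    rw [← LinearMap.ker_eq_bot, LinearMap.ker_eq_bot']
    rintro ⟨x, y⟩ hxy
    obtain ⟨rfl, rfl⟩ := LinearIndependent.pair_iff.mp hPQ x y hxy
    rfl
  obtain ⟨⟨x, y⟩, hxy⟩ := Finite.surjective_of_injective hf R
  exact ⟨x, y, hxy⟩

lemma zsmul_eq_zero_and_closure_eq_top_of_linearIndependent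
    (hPQ : LinearIndependent (ZMod m) ![P, Q]) :
    (∀ a b : ℤ, a • P + b • Q = 0 → a • P = 0 ∧ b • Q = 0) ∧
      AddSubgroup.closure ({P, Q} : Set (ZMod m × ZMod m)) = ⊤ := by
  refine ⟨fun a b hab => ?_, eq_top_iff.mpr fun R _ => ?_⟩
  · simp only [← Int.cast_smul_eq_zsmul (ZMod m)] at hab ⊢
    obtain ⟨ha, hb⟩ := LinearIndependent.pair_iff.mp hPQ _ _ hab
    simp [ha, hb]
  · obtain ⟨x, y, rfl⟩ := exists_smul_add_smul_eq_of_linearIndependent hPQ R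
    rw [← ZMod.natCast_zmod_val x, ← ZMod.natCast_zmod_val y, Nat.cast_smul_eq_nsmul,
      Nat.cast_smul_eq_nsmul]
    exact add_mem (nsmul_mem (AddSubgroup.subset_closure (by simp)) _)
      (nsmul_mem (AddSubgroup.subset_closure (by simp)) _)

lemma hasStandardForm_of_linearIndependent [Fact (1 < m)]
    (hPQ : LinearIndependent (ZMod m) ![P, Q]) {ξ : ZMod m} (hξ : IsUnit ξ) :
    HasStandardForm m {P, Q, -ξ • P + Q} := by
  wlog hξ₂ : 2 * ξ.val ≤ m generalizing Q ξ
  · -- in the basis `P, -ξ • P + Q` we have `Q = -(-ξ) • P + (-ξ • P + Q)`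
    have := this (linearIndependent_pair_neg_smul_add hPQ ξ) hξ.neg
      (by have := ZMod.val_add_val_neg_of_ne_zero hξ.ne_zero; omega)
    rwa [neg_neg, ← add_assoc, ← add_smul, add_neg_cancel, zero_smul, zero_add,
      Multiset.insert_eq_cons P, Multiset.pair_comm] at this
  obtain ⟨hZ, hcl⟩ := zsmul_eq_zero_and_closure_eq_top_of_linearIndependent hPQ
  refine ⟨P, Q, ξ.val, hZ, hcl, ZMod.val_pos.mpr hξ.ne_zero, ?_, ?_, hξ₂, ?_⟩
  · have := ZMod.val_lt ξ
    omega
  · simpa using ZMod.val_coe_unit_coprime hξ.unit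
  · rw [← Int.cast_smul_eq_zsmul (ZMod m)]
    simp

end Basis

theorem hasStandardForm_of_isShortZeroSumFree {m : ℕ} [Fact (1 < m)] {A B C : ZMod m × ZMod m}
    (h : IsShortZeroSumFree m ((m - 1) • ({A, B, C} : Multiset (ZMod m × ZMod m)))) :
    HasStandardForm m {A, B, C} := by
  have hAB := h.linearIndependent_pair
  obtain ⟨p, q, hpq⟩ := exists_smul_add_smul_eq_of_linearIndependent hAB (-C)
  have hrel : ∀ γ : ZMod m, γ ≠ 0 → m < (γ * p).val + (γ * q).val + γ.val := by
    intro γ hγ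
    by_contra! hle
    refine hγ (h.eq_zero_of_smul_add_smul_add_smul_eq_zero ?_ hle).2.2
    rw [mul_smul, mul_smul, ← smul_add, hpq, ← smul_add, neg_add_cancel, smul_zero]
  have hp := ZMod.isUnit_of_forall_lt_val_add hrel
  have hq := ZMod.isUnit_of_forall_lt_val_add (p := q) (q := p) fun γ hγ => by
    have := hrel γ hγ; omega
  rcases ZMod.eq_neg_one_or_eq_neg_one_or_add_eq_zero hrel with rfl | rfl | hpq₀
  · obtain rfl : C = -q • B + A := by rw [← neg_neg C, ← hpq]; module
    have hBA : LinearIndependent (ZMod m) ![B, A] := LinearIndependent.pair_symm_iff.mp hAB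
    rw [show ({A, B, -q • B + A} : Multiset _) = {B, A, -q • B + A} from Multiset.cons_swap ..]
    exact hasStandardForm_of_linearIndependent hBA hq
  · obtain rfl : C = -p • A + B := by rw [← neg_neg C, ← hpq]; module
    exact hasStandardForm_of_linearIndependent hAB hp
  · have hCB : LinearIndependent (ZMod m) ![C, B] := by
      rw [← show ({C, B, A} : Multiset _) = {A, B, C} from Multiset.coe_reverse [A, B, C]] at h
      exact h.linearIndependent_pair
    obtain rfl : q = -p := by linear_combination hpq₀
    have hinv := ZMod.inv_mul_of_unit p hp
    obtain rfl : A = -p⁻¹ • C + B := by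
      linear_combination (norm := module) p⁻¹ • hpq - hinv • (A - B)
    rw [show ({-p⁻¹ • C + B, B, C} : Multiset _) = {C, B, -p⁻¹ • C + B} from
      (Multiset.coe_reverse _).symm]
    exact hasStandardForm_of_linearIndependent hCB (IsUnit.of_mul_eq_one p hinv)

/-- If `T` is a sequence of length 3 over `C_m ⊕ C_m` such that `T^{m-1}`
has no short zero-sum subsequence, then `T = f₁ · f₂ · (-x f₁ + f₂)` for a basis
`{f₁, f₂}` and some `x ∈ [1, m-1]` with `gcd(x, m) = 1` and `x ≤ m/2`; in particular,
for each `f` in the support of `T`, `(f⁻¹T)^{m-1}` has no nonempty zero-sum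
subsequence. -/
theorem stmt_18 (m : ℕ) (hm : 2 ≤ m) (T : Multiset (ZMod m × ZMod m))
    (hT : T.card = 3)
    (hnoshort : ¬ ∃ U ≤ (m - 1) • T, U ≠ 0 ∧ U.sum = 0 ∧ Multiset.card U ≤ m) :
    (∃ (f1 f2 : ZMod m × ZMod m) (x : ℕ),
      (∀ a b : ℤ, a • f1 + b • f2 = 0 → a • f1 = 0 ∧ b • f2 = 0) ∧
      AddSubgroup.closure ({f1, f2} : Set (ZMod m × ZMod m)) = ⊤ ∧
      1 ≤ x ∧ x ≤ m - 1 ∧ Nat.gcd x m = 1 ∧ 2 * x ≤ m ∧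
      T = {f1, f2, (-(x : ℤ)) • f1 + f2}) ∧
    ∀ f ∈ T, ¬ ∃ U ≤ (m - 1) • (T.erase f), U ≠ 0 ∧ U.sum = 0 := by
  have : Fact (1 < m) := ⟨hm⟩
  have h : IsShortZeroSumFree m ((m - 1) • T) := hnoshort
  refine ⟨?_, fun f hf => h.isZeroSumFree_nsmul_erase hT hf⟩
  obtain ⟨A, B, C, rfl⟩ := Multiset.card_eq_three.mp hT
  exact hasStandardForm_of_isShortZeroSumFree h
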